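/- Let (V̄, Ē) be a finite oriented graph with vertex set V̄ partitioned into internal vertices V and boundary vertices ∂V, edge set Ē = E ∪ ∂E, and boundary temperatures T_j > 0 for j ∈ ∂V. For every bounded measurable function g : ℝ₊^V̄ → ℝ, every X ∈ ℝ₊^V̄ with all coordinates strictly positive, and every T ∈ ℝ₊^V̄ with T_j equal to the boundary temperature for each j ∈ ∂V, one has L^{X,T}(g ∘ π)(X,T) = (L^ζ g)(X ∘ T), where π(X,T) = X ∘ T := (X_i T_i)_{i∈V̄} is the Hadamard product. In particular, the ζ := X∘T marginal of the joint process is a Markov process with generator L^ζ (the KMP generator with boundary conditions T_{∂V}). -/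

import Mathlib

/-!
An internal KMP move on an edge `ij` sends `(X_i, X_j)` to `(u, 1 - u) · (X_i + X_j)` and both
temperatures to the `X`-weighted mean `(X_i T_i + X_j T_j) / (X_i + X_j)`, so the products
`ζ_k = X_k T_k` go to `(u, 1 - u) · (ζ_i + ζ_j)`: exactly the KMP move of `ζ`. A boundary move
sends `X_j` to `b` and keeps `T_j`, so `ζ_j` becomes `b T_j`. Hence the two generators agree
integrand by integrand, up to the order of the `u`- and `b`-integrals on boundary edges, which
Fubini exchanges because `g` is bounded and measurable and `e^{-b}` is integrable.
-/

open MeasureTheory Finset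

noncomputable section

/-- Update two coordinates of a configuration. -/
def upd2 {V : Type*} [DecidableEq V] {α : Type*} (x : V → α) (i j : V) (a b : α) : V → α :=
  Function.update (Function.update x i a) j b

/-- The KMP generator with boundary conditions `T` on the graph with internal edges `Eint`
and boundary edges `Ebd`. -/
noncomputable def Lzeta {V : Type*} [Fintype V] [DecidableEq V]
    (Eint Ebd : Finset (V × V)) (T : V → ℝ)
    (g : (V → ℝ) → ℝ) (ζ : V → ℝ) : ℝ :=
  (∑ e ∈ Eint, ∫ u in (0:ℝ)..1,
      (g (upd2 ζ e.1 e.2 (u * (ζ e.1 + ζ e.2)) ((1 - u) * (ζ e.1 + ζ e.2))) - g ζ))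
  + ∑ e ∈ Ebd, ∫ u in (0:ℝ)..1, ∫ b in Set.Ioi (0:ℝ),
      Real.exp (-b) * (g (upd2 ζ e.1 e.2 (u * (ζ e.1 + ζ e.2)) (b * T e.2)) - g ζ)

/-- Generator of the joint KMP-temperature process `(X, T)`. -/
noncomputable def LXT {V : Type*} [Fintype V] [DecidableEq V]
    (Eint Ebd : Finset (V × V))
    (f : (V → ℝ) × (V → ℝ) → ℝ) (p : (V → ℝ) × (V → ℝ)) : ℝ :=
  (∑ e ∈ Eint, ∫ u in (0:ℝ)..1,
      (f (upd2 p.1 e.1 e.2 (u * (p.1 e.1 + p.1 e.2)) ((1 - u) * (p.1 e.1 + p.1 e.2)),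
          upd2 p.2 e.1 e.2
            ((p.1 e.1 * p.2 e.1 + p.1 e.2 * p.2 e.2) / (p.1 e.1 + p.1 e.2))
            ((p.1 e.1 * p.2 e.1 + p.1 e.2 * p.2 e.2) / (p.1 e.1 + p.1 e.2)))
        - f p))
  + ∑ e ∈ Ebd, ∫ b in Set.Ioi (0:ℝ), Real.exp (-b) * ∫ u in (0:ℝ)..1,
      (f (upd2 p.1 e.1 e.2 (u * (p.1 e.1 + p.1 e.2)) b,
          Function.update p.2 e.1
            ((p.1 e.1 * p.2 e.1 + p.1 e.2 * p.2 e.2) / (p.1 e.1 + p.1 e.2)))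
        - f p)

section upd2

variable {V : Type*} [DecidableEq V]

theorem upd2_mul {M : Type*} [Mul M] (x y : V → M) (i j : V) (a b c d : M) :
    upd2 x i j a b * upd2 y i j c d = upd2 (x * y) i j (a * c) (b * d) := by
  simp only [upd2, Function.update_mul]

theorem upd2_mul_update_of_ne {M : Type*} [Mul M] (x y : V → M) {i j : V} (hij : i ≠ j)
    (a b c : M) :
    upd2 x i j a b * Function.update y i c = upd2 (x * y) i j (a * c) (b * y j) := by
  have hy : Function.update y i c = upd2 y i j c (y j) := by
    rw [upd2, ← Function.update_of_ne hij.symm c y, Function.update_eq_self]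
  rw [hy, upd2_mul]

theorem measurable_upd2 {α β : Type*} [MeasurableSpace α] [MeasurableSpace β] (x : V → α)
    (i j : V) {f f' : β → α} (hf : Measurable f) (hf' : Measurable f') :
    Measurable fun p => upd2 x i j (f p) (f' p) := by
  unfold upd2
  fun_prop

theorem upd2_mul_upd2_weightedMean (X Θ : V → ℝ) {i j : V} (hX : X i + X j ≠ 0) (u : ℝ) :
    upd2 X i j (u * (X i + X j)) ((1 - u) * (X i + X j)) *
        upd2 Θ i j ((X i * Θ i + X j * Θ j) / (X i + X j)) ((X i * Θ i + X j * Θ j) / (X i + X j))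
      = upd2 (X * Θ) i j (u * (X i * Θ i + X j * Θ j)) ((1 - u) * (X i * Θ i + X j * Θ j)) := by
  rw [upd2_mul]
  congr 1 <;> field_simp

theorem upd2_mul_update_weightedMean (X Θ : V → ℝ) {i j : V} (hij : i ≠ j)
    (hX : X i + X j ≠ 0) {t : ℝ} (hΘ : Θ j = t) (u b : ℝ) :
    upd2 X i j (u * (X i + X j)) b * Function.update Θ i ((X i * Θ i + X j * Θ j) / (X i + X j))
      = upd2 (X * Θ) i j (u * (X i * Θ i + X j * Θ j)) (b * t) := by
  rw [upd2_mul_update_of_ne _ _ hij, hΘ]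
  congr 1
  field_simp

end upd2

theorem integral_mul_intervalIntegral_comm {α : Type*} [MeasurableSpace α] {μ : Measure α}
    [SFinite μ] {w : α → ℝ} (hw : Integrable w μ) {a b : ℝ} (hab : a ≤ b) {F : ℝ → α → ℝ}
    (hF : Measurable (Function.uncurry F)) {C : ℝ} (hC : ∀ u v, |F u v| ≤ C) :
    ∫ v, w v * (∫ u in a..b, F u v) ∂μ = ∫ u in a..b, ∫ v, w v * F u v ∂μ := by
  have hint : Integrable (Function.uncurry fun v u => w v * F u v)
      (μ.prod (volume.restrict (Set.Ioc a b))) :=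
    (hw.comp_fst _).mul_bdd (hF.comp measurable_swap).aestronglyMeasurable
      (Filter.Eventually.of_forall fun p => hC p.2 p.1)
  simp_rw [← intervalIntegral.integral_const_mul, intervalIntegral.integral_of_le hab]
  exact integral_integral_swap hint

theorem lxt_hadamard_eq_lzeta
    {V : Type*} [Fintype V] [DecidableEq V]
    (bd : Finset V) (Eint Ebd : Finset (V × V)) (T : V → ℝ)
    (hEb : ∀ e ∈ Ebd, e.1 ∉ bd ∧ e.2 ∈ bd)
    (g : (V → ℝ) → ℝ) (hgm : Measurable g) (hgb : ∃ C, ∀ ζ, |g ζ| ≤ C)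
    (X Θ : V → ℝ) (hX : ∀ i, 0 < X i)
    (hΘbd : ∀ j ∈ bd, Θ j = T j) :
    LXT Eint Ebd (fun p => g (fun i => p.1 i * p.2 i)) (X, Θ)
      = Lzeta Eint Ebd T g (fun i => X i * Θ i) := by
  change LXT Eint Ebd (fun p => g (p.1 * p.2)) (X, Θ) = Lzeta Eint Ebd T g (X * Θ)
  obtain ⟨C, hgC⟩ := hgb
  have hX' (i j : V) : X i + X j ≠ 0 := (add_pos (hX i) (hX j)).ne'
  unfold LXT Lzeta
  dsimp only
  simp only [Pi.mul_apply]
  congr 1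
  · simp only [upd2_mul_upd2_weightedMean X Θ (hX' _ _)]
  · refine Finset.sum_congr rfl fun e he => ?_
    obtain ⟨he₁, he₂⟩ := hEb e he
    have hne : e.1 ≠ e.2 := fun h => he₁ (h ▸ he₂)
    simp only [upd2_mul_update_weightedMean X Θ hne (hX' _ _) (hΘbd _ he₂)]
    have hexp : IntegrableOn (fun b => Real.exp (-b)) (Set.Ioi 0) := by
      simpa using exp_neg_integrableOn_Ioi (0 : ℝ) one_pos
    refine integral_mul_intervalIntegral_comm hexp zero_le_one ?_ (C := C + C)
      fun _ _ => (abs_sub _ _).trans (add_le_add (hgC _) (hgC _))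
    exact (hgm.comp (measurable_upd2 _ _ _ (measurable_fst.mul_const _)
      (measurable_snd.mul_const _))).sub_const _

end
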